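/- arXiv:math/0110033 — 2 statements merged into one kernel-verified Lean document; each statement's English description precedes it below -/
import Mathlib

section
/- Let A be a Hopf algebra over a field k, g, h group-like elements of A, and a, b elements with Δ(a) = g⊗a + a⊗1 and Δ(b) = h⊗b + b⊗1 ((g,1)- and (h,1)-skew-primitives). Suppose gh = hg, gag⁻¹ = α a, hbh⁻¹ = β b, gbg⁻¹ = γ b, hah⁻¹ = γ⁻¹ a for scalars with γ·γ⁻¹ = 1. Then ab - γ ba is a (gh,1)-skew-primitive: Δ(ab - γba) = gh ⊗ (ab - γba) + (ab - γba) ⊗ 1. -/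
open TensorProduct

theorem stmt_11 (k : Type*) [Field k] (A : Type*) [Ring A] [HopfAlgebra k A]
    (g h a b : A) (α β γ γ' : k)
    (hg : Coalgebra.comul (R := k) g = g ⊗ₜ[k] g)
    (hh : Coalgebra.comul (R := k) h = h ⊗ₜ[k] h)
    (hgh : g * h = h * g)
    (ha : Coalgebra.comul (R := k) a = g ⊗ₜ[k] a + a ⊗ₜ[k] 1)
    (hb : Coalgebra.comul (R := k) b = h ⊗ₜ[k] b + b ⊗ₜ[k] 1)
    (hga : g * a = α • (a * g)) (hhb : h * b = β • (b * h))
    (hgb : g * b = γ • (b * g)) (hha : h * a = γ' • (a * h))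
    (hγ : γ * γ' = 1) :
    Coalgebra.comul (R := k) (a * b - γ • (b * a))
      = (g * h) ⊗ₜ[k] (a * b - γ • (b * a))
        + (a * b - γ • (b * a)) ⊗ₜ[k] 1 := by
  rw [map_sub, map_smul, Bialgebra.comul_mul, Bialgebra.comul_mul, ha, hb]
  rw [add_mul, mul_add, mul_add, add_mul, mul_add, mul_add]
  simp only [Algebra.TensorProduct.tmul_mul_tmul, mul_one, one_mul]
  have e1 : (g * b) ⊗ₜ[k] a = γ • ((b * g) ⊗ₜ[k] a) := by
    rw [hgb, TensorProduct.smul_tmul']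
  have e2 : (a * h) ⊗ₜ[k] b = γ • ((h * a) ⊗ₜ[k] b) := by
    rw [hha, TensorProduct.smul_tmul', smul_smul, hγ, one_smul]
  rw [e1, e2, hgh]
  simp only [TensorProduct.tmul_sub, TensorProduct.sub_tmul, TensorProduct.tmul_smul,
    TensorProduct.smul_tmul', smul_add]
  module
end

section
/- Let A be an algebra over a field k of characteristic ≠ 2, generated by a group of invertible elements Γ together with elements a₁, a₂, a₃, where Γ = C₂ × C₂ = ⟨g₁, g₂⟩, subject to g₁aᵢ = -aᵢg₁, g₂aᵢ = aᵢg₂ (i=1,2), g₁a₃ = a₃g₁, g₂a₃ = -a₃g₂, aᵢ² = 0 (i=1,2,3), a₁a₂ + a₂a₁ = 0, and aᵢa₃ - a₃aᵢ = λᵢ(g₁g₂ - 1) for i = 1,2. If A has dimension 32 (equivalently, the PBW-type spanning set is a basis), then λ₁ = λ₂ = 0. (The obstruction comes from resolving the overlap g₁a₃a₁ two ways: g₁a₃a₁ = -a₁a₃g₁ + λ₁g₂ - λ₁g₁ and g₁a₃a₁ = -a₁a₃g₁ - λ₁g₂ + λ₁g₁, forcing 2λ₁(g₂ - g₁) = 0.)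 -/
theorem stmt_18 (k : Type*) [Field k] (hchar : ringChar k ≠ 2)
    (A : Type*) [Ring A] [Algebra k A]
    (g₁ g₂ a₁ a₂ a₃ : A) (lam₁ lam₂ : k)
    (hg₁ : g₁ ^ 2 = 1) (hg₂ : g₂ ^ 2 = 1) (hgg : g₁ * g₂ = g₂ * g₁)
    (h11 : g₁ * a₁ = -(a₁ * g₁)) (h12 : g₁ * a₂ = -(a₂ * g₁))
    (h21 : g₂ * a₁ = a₁ * g₂) (h22 : g₂ * a₂ = a₂ * g₂)
    (h13 : g₁ * a₃ = a₃ * g₁) (h23 : g₂ * a₃ = -(a₃ * g₂))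
    (ha1 : a₁ ^ 2 = 0) (ha2 : a₂ ^ 2 = 0) (ha3 : a₃ ^ 2 = 0)
    (hanti : a₁ * a₂ + a₂ * a₁ = 0)
    (hl1 : a₁ * a₃ - a₃ * a₁ = lam₁ • (g₁ * g₂ - 1))
    (hl2 : a₂ * a₃ - a₃ * a₂ = lam₂ • (g₁ * g₂ - 1))
    (hspan : ∀ x : A, x ∈ Submodule.span k (Set.range
      (fun v : Fin 2 × Fin 2 × Fin 2 × Fin 2 × Fin 2 =>
        g₁ ^ (v.1 : ℕ) * g₂ ^ (v.2.1 : ℕ) * a₁ ^ (v.2.2.1 : ℕ)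
          * a₂ ^ (v.2.2.2.1 : ℕ) * a₃ ^ (v.2.2.2.2 : ℕ))))
    (hdim : Module.finrank k A = 32) :
    lam₁ = 0 ∧ lam₂ = 0 := by
  -- The spanning family
  set b : Fin 2 × Fin 2 × Fin 2 × Fin 2 × Fin 2 → A := fun v =>
    g₁ ^ (v.1 : ℕ) * g₂ ^ (v.2.1 : ℕ) * a₁ ^ (v.2.2.1 : ℕ)
      * a₂ ^ (v.2.2.2.1 : ℕ) * a₃ ^ (v.2.2.2.2 : ℕ) with hb
  have hli : LinearIndependent k b := by
    apply linearIndependent_of_top_le_span_of_card_eq_finrank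
    · intro x _
      exact hspan x
    · rw [hdim]; rfl
  have hne : g₁ ≠ g₂ := by
    intro h
    have h1 : b (1, 0, 0, 0, 0) = g₁ := by simp [hb]
    have h2 : b (0, 1, 0, 0, 0) = g₂ := by simp [hb]
    have heq : b (1, 0, 0, 0, 0) = b (0, 1, 0, 0, 0) := by rw [h1, h2, h]
    have := hli.injective heq
    simp at this
  -- Key lemma: the overlap forces lam = 0
  have main : ∀ (a : A) (lam : k), g₁ * a = -(a * g₁) →
      a * a₃ - a₃ * a = lam • (g₁ * g₂ - 1) → lam = 0 := by
    intro a lam hg hl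
    by_contra hlam
    -- resolve g₁ * (a₃ * a) two ways
    have e1 : g₁ * (a₃ * a) = -((a₃ * a) * g₁) := by
      rw [← mul_assoc, h13, mul_assoc, hg, mul_neg, mul_assoc]
    have hX : a₃ * a = a * a₃ - lam • (g₁ * g₂ - 1) := by
      rw [← hl]; abel
    rw [hX] at e1
    have l1 : g₁ * (a * a₃) = -((a * a₃) * g₁) := by
      rw [← mul_assoc, hg, neg_mul, mul_assoc, h13, ← mul_assoc]
    have l2 : g₁ * (g₁ * g₂ - 1) = g₂ - g₁ := by
      rw [mul_sub, ← mul_assoc, ← sq, hg₁, one_mul, mul_one]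
    have l3 : (g₁ * g₂ - 1) * g₁ = g₂ - g₁ := by
      rw [sub_mul, one_mul, mul_assoc, ← hgg, ← mul_assoc, ← sq, hg₁, one_mul]
    rw [mul_sub, sub_mul, mul_smul_comm, smul_mul_assoc, l1, l2, l3] at e1
    -- e1 : -((a*a₃)*g₁) - lam•(g₂-g₁) = -((a*a₃)*g₁ - lam•(g₂-g₁))
    have e2 : lam • (g₂ - g₁) + lam • (g₂ - g₁) = 0 := by
      calc lam • (g₂ - g₁) + lam • (g₂ - g₁)
          = -((a * a₃) * g₁ - lam • (g₂ - g₁))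
            - (-((a * a₃) * g₁) - lam • (g₂ - g₁)) := by abel
        _ = (-((a * a₃) * g₁) - lam • (g₂ - g₁))
            - (-((a * a₃) * g₁) - lam • (g₂ - g₁)) := by rw [e1]
        _ = 0 := by abel
    have h2k : (2 : k) ≠ 0 := Ring.two_ne_zero hchar
    have e3 : (2 : k) • (lam • (g₂ - g₁)) = 0 := by
      rw [two_smul]; exact e2
    have h2l : (2 : k) * lam ≠ 0 := mul_ne_zero h2k hlam
    have e3' : ((2 : k) * lam) • (g₂ - g₁) = 0 := by rw [mul_smul]; exact e3
    have e4 : g₂ - g₁ = 0 := by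
      have h := congrArg (fun y => ((2 : k) * lam)⁻¹ • y) e3'
      simpa only [smul_smul, inv_mul_cancel₀ h2l, one_smul, smul_zero] using h
    exact hne (sub_eq_zero.mp e4).symm
  exact ⟨main a₁ lam₁ h11 hl1, main a₂ lam₂ h12 hl2⟩
end
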